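/- Let G₁ = (T₁, A₁) and G₂ = (T₂, A₂) be games that are both injective with respect to finite-game embeddings, with T₁, T₂, A₁ and A₂ at most countable. If G ≤ G₁ is a finite game and f : G → G₂ is a game embedding, then f extends to an isomorphism of games f̃ : G₁ → G₂. -/

import Mathlib

/-!
Back-and-forth. The conditions are embeddings of finite subgames of `G₁` into `G₂`, ordered by
extension. Injectivity of `G₂` extends a condition so that its domain contains any prescribed run
of `G₁`. A condition is an isomorphism onto a finite subgame of `G₂`, whose inverse is a condition
from `G₂` to `G₁`; extending that inverse by injectivity of `G₁` and inverting again puts any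
prescribed run of `G₂` into the image. Countability provides countably many runs through all
positions and all payoff runs of both games, and the Rasiowa–Sikorski lemma yields a directed
family of conditions meeting all of them; its union is the required isomorphism.
-/

universe u v w x y

namespace FraisseGames

/-- `R↾n`. -/
def runPrefix {M : Type u} (R : ℕ → M) (n : ℕ) : List M :=
  (List.range n).map R

def IsGameTree {M : Type u} (T : Set (List M)) : Prop :=
  (∀ t ∈ T, ∀ k : ℕ, t.take k ∈ T) ∧ ∀ t ∈ T, ∃ x : M, t ++ [x] ∈ T

def Runs {M : Type u} (T : Set (List M)) : Set (ℕ → M) :=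
  {R | ∀ n : ℕ, runPrefix R n ∈ T}

structure Game (M : Type u) : Type u where
  tree : Set (List M)
  isGameTree : IsGameTree tree
  payoff : Set (ℕ → M)
  payoff_subset : payoff ⊆ Runs tree

def Game.IsFin {M : Type u} (G : Game M) : Prop := (Runs G.tree).Finite

/-- `G ≤ G'`. -/
def Game.Sub {M : Type u} (G G' : Game M) : Prop :=
  G.tree ⊆ G'.tree ∧ G.payoff = G'.payoff ∩ Runs G.tree

def Chronological {M₁ : Type u} {M₂ : Type v} (T₁ : Set (List M₁)) (T₂ : Set (List M₂))
    (f : List M₁ → List M₂) : Prop :=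
  (∀ t ∈ T₁, f t ∈ T₂) ∧ (∀ t ∈ T₁, (f t).length = t.length) ∧
    ∀ t ∈ T₁, ∀ k : ℕ, f (t.take k) = (f t).take k

/-- `BarMapsTo f R S` says that `f̄ R = S`, i.e. `S↾n = f (R↾n)` for all `n`. -/
def BarMapsTo {M₁ : Type u} {M₂ : Type v} (f : List M₁ → List M₂)
    (R : ℕ → M₁) (S : ℕ → M₂) : Prop :=
  ∀ n : ℕ, runPrefix S n = f (runPrefix R n)

def IsAMorphism {M₁ : Type u} {M₂ : Type v} (G₁ : Game M₁) (G₂ : Game M₂)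
    (f : List M₁ → List M₂) : Prop :=
  Chronological G₁.tree G₂.tree f ∧
    ∀ R ∈ G₁.payoff, ∀ S : ℕ → M₂, BarMapsTo f R S → S ∈ G₂.payoff

def IsGameEmbedding {M₁ : Type u} {M₂ : Type v} (G₁ : Game M₁) (G₂ : Game M₂)
    (f : List M₁ → List M₂) : Prop :=
  Chronological G₁.tree G₂.tree f ∧
    (∀ t ∈ G₁.tree, ∀ s ∈ G₁.tree, f t = f s → t = s) ∧
    ∀ R ∈ Runs G₁.tree, ∀ S : ℕ → M₂, BarMapsTo f R S → (R ∈ G₁.payoff ↔ S ∈ G₂.payoff)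

/-- A bijective game embedding: the values of `f` off the tree of `G₁` are irrelevant, so
bijectivity means surjectivity onto the tree of `G₂`. -/
def IsGameIso {M₁ : Type u} {M₂ : Type v} (G₁ : Game M₁) (G₂ : Game M₂)
    (f : List M₁ → List M₂) : Prop :=
  IsGameEmbedding G₁ G₂ f ∧ ∀ s ∈ G₂.tree, ∃ t ∈ G₁.tree, f t = s

def c00 : Set (ℕ → ℕ) := {R | ∃ N : ℕ, ∀ n ≥ N, R n = 0}

/-- The game `G_FL = (ω^{<ω}, c₀₀)`. -/
def GFL : Game ℕ where
  tree := Set.univ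
  isGameTree := ⟨fun _ _ _ => trivial, fun _ _ => ⟨0, trivial⟩⟩
  payoff := c00
  payoff_subset := fun _ _ _ => trivial

def InjWrtFinGameEmb.{u', v', w'} {N : Type w'} (G : Game N) : Prop :=
  ∀ (M : Type u') (M' : Type v') (H : Game M) (H' : Game M'),
    H.IsFin → H'.IsFin →
    ∀ e : List M → List M', IsGameEmbedding H H' e →
    ∀ f : List M → List N, IsGameEmbedding H G f →
      ∃ g : List M' → List N, IsGameEmbedding H' G g ∧ ∀ t ∈ H.tree, g (e t) = f t

section Runs

variable {M : Type*}

@[simp]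
theorem runPrefix_length (R : ℕ → M) (n : ℕ) : (runPrefix R n).length = n := by
  simp [runPrefix]

theorem runPrefix_succ (R : ℕ → M) (n : ℕ) : runPrefix R (n + 1) = runPrefix R n ++ [R n] := by
  simp [runPrefix, List.range_succ]

theorem take_runPrefix (R : ℕ → M) (m n : ℕ) :
    (runPrefix R n).take m = runPrefix R (min m n) := by
  simp [runPrefix, ← List.map_take, List.take_range]

theorem take_runPrefix_of_le (R : ℕ → M) {m n : ℕ} (h : m ≤ n) :
    (runPrefix R n).take m = runPrefix R m := by
  rw [take_runPrefix, min_eq_left h]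

theorem runPrefix_comp {N : Type*} (φ : M → N) (R : ℕ → M) (n : ℕ) :
    runPrefix (φ ∘ R) n = (runPrefix R n).map φ := by
  simp [runPrefix]

theorem runPrefix_injective {R R' : ℕ → M} (h : ∀ n, runPrefix R n = runPrefix R' n) :
    R = R' := by
  funext n
  simpa [runPrefix_succ, h n] using h (n + 1)

theorem runs_mono {T T' : Set (List M)} (h : T ⊆ T') : Runs T ⊆ Runs T' :=
  fun _ hR n => h (hR n)

theorem isPrefix_of_le {ψ : ℕ → List M} (hψ : ∀ n, ψ n <+: ψ (n + 1)) {m n : ℕ} (h : m ≤ n) :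
    ψ m <+: ψ n := by
  induction n, h using Nat.le_induction with
  | base => exact List.prefix_refl _
  | succ n _ ih => exact ih.trans (hψ n)

theorem exists_runPrefix_eq_take {ψ : ℕ → List M} (hψ : ∀ n, ψ n <+: ψ (n + 1))
    (hlen : ∀ n, n ≤ (ψ n).length) : ∃ R : ℕ → M, ∀ n, runPrefix R n = (ψ n).take n := by
  refine ⟨fun n => (ψ (n + 1))[n]'(hlen (n + 1)), fun n => ?_⟩
  refine List.ext_getElem (by simp [hlen n]) fun i hi _ => ?_
  rw [runPrefix_length] at hi
  simp [runPrefix, (isPrefix_of_le hψ hi).getElem]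

def prefixes (S : Set (ℕ → M)) : Set (List M) :=
  {t | ∃ R ∈ S, runPrefix R t.length = t}

theorem subset_prefixes_runs {T : Set (List M)} (hT : IsGameTree T) : T ⊆ prefixes (Runs T) := by
  intro t ht
  choose next hnext using hT.2
  let u : ℕ → T := fun n => (fun s : T => ⟨s.1 ++ [next s.1 s.2], hnext s.1 s.2⟩)^[n] ⟨t, ht⟩
  have hu : ∀ n, (u n).1 <+: (u (n + 1)).1 := fun n => by
    simp only [u, Function.iterate_succ_apply']
    exact List.prefix_append _ _
  have hlen : ∀ n, (u n).1.length = t.length + n := by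
    intro n
    induction n with
    | zero => rfl
    | succ n ih =>
      simp only [u, Function.iterate_succ_apply'] at ih ⊢
      simp [ih, Nat.add_assoc]
  obtain ⟨R, hR⟩ := exists_runPrefix_eq_take hu fun n => by rw [hlen]; omega
  refine ⟨R, fun n => hR n ▸ hT.1 _ (u n).2 n, ?_⟩
  rw [hR]
  exact (List.prefix_iff_eq_take.1 (isPrefix_of_le hu (Nat.zero_le t.length))).symm

theorem runPrefix_mem_prefixes {S : Set (ℕ → M)} {R : ℕ → M} (hR : R ∈ S) (n : ℕ) :
    runPrefix R n ∈ prefixes S :=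
  ⟨R, hR, by rw [runPrefix_length]⟩

theorem prefixes_mono {S S' : Set (ℕ → M)} (h : S ⊆ S') : prefixes S ⊆ prefixes S' :=
  fun _ ⟨R, hR, hRt⟩ => ⟨R, h hR, hRt⟩

theorem prefixes_subset {T : Set (List M)} {S : Set (ℕ → M)} (h : S ⊆ Runs T) :
    prefixes S ⊆ T :=
  fun _ ⟨_, hR, hRt⟩ => hRt ▸ h hR _

theorem subset_runs_prefixes (S : Set (ℕ → M)) : S ⊆ Runs (prefixes S) :=
  fun _ hR n => runPrefix_mem_prefixes hR n

theorem isGameTree_prefixes (S : Set (ℕ → M)) : IsGameTree (prefixes S) := by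
  refine ⟨fun t ⟨R, hR, hRt⟩ k => ⟨R, hR, ?_⟩, fun t ⟨R, hR, hRt⟩ => ⟨R t.length, R, hR, ?_⟩⟩
  · rw [List.length_take, ← take_runPrefix, hRt]
  · rw [List.length_append, List.length_singleton, runPrefix_succ, hRt]

/-- Finite sets of runs are closed: distinct runs have distinct prefixes from some length on. -/
theorem runs_prefixes {S : Set (ℕ → M)} (hS : S.Finite) : Runs (prefixes S) = S := by
  refine Set.Subset.antisymm (fun R hR => ?_) (subset_runs_prefixes S)
  by_contra hRS
  have hsep : ∀ R' ∈ S, ∀ᶠ n in Filter.atTop, runPrefix R' n ≠ runPrefix R n := by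
    intro R' hR'
    obtain ⟨m, hm⟩ : ∃ m, runPrefix R' m ≠ runPrefix R m := by
      by_contra! h
      exact hRS (runPrefix_injective h ▸ hR')
    filter_upwards [Filter.eventually_ge_atTop m] with n hmn hn
    exact hm (by rw [← take_runPrefix_of_le R' hmn, hn, take_runPrefix_of_le R hmn])
  obtain ⟨n, hn⟩ := (hS.eventually_all.2 hsep).exists
  obtain ⟨R', hR', hR'n⟩ := hR n
  exact hn R' hR' (by rwa [runPrefix_length] at hR'n)

end Runs

namespace Game

variable {M : Type*}

def restrict (G : Game M) (S : Set (ℕ → M)) : Game M where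
  tree := prefixes S
  isGameTree := isGameTree_prefixes S
  payoff := G.payoff ∩ S
  payoff_subset := fun _ hR => subset_runs_prefixes S hR.2

theorem restrict_isFin (G : Game M) {S : Set (ℕ → M)} (hS : S.Finite) : (G.restrict S).IsFin := by
  rw [IsFin, restrict, runs_prefixes hS]
  exact hS

theorem restrict_sub {G : Game M} {S : Set (ℕ → M)} (hS : S.Finite) (hSG : S ⊆ Runs G.tree) :
    (G.restrict S).Sub G :=
  ⟨prefixes_subset hSG, by rw [restrict, runs_prefixes hS]⟩

theorem Sub.of_tree_subset {G H K : Game M} (hH : H.Sub G) (hK : K.Sub G)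
    (h : H.tree ⊆ K.tree) : H.Sub K :=
  ⟨h, by rw [hH.2, hK.2, Set.inter_assoc, Set.inter_eq_right.2 (runs_mono h)]⟩

theorem Sub.isGameEmbedding_id {G H : Game M} (h : H.Sub G) : IsGameEmbedding H G id := by
  refine ⟨⟨fun t ht => h.1 ht, fun _ _ => rfl, fun _ _ _ => rfl⟩, fun _ _ _ _ hts => hts,
    fun R hR S hS => ?_⟩
  rw [runPrefix_injective fun n => hS n, h.2]
  exact and_iff_left hR

end Game

section Embeddings

variable {M₁ M₂ M₃ : Type*} {T₁ : Set (List M₁)} {T₂ : Set (List M₂)}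
  {f : List M₁ → List M₂} {R R' : ℕ → M₁} {S S' : ℕ → M₂}

theorem BarMapsTo.unique (h : BarMapsTo f R S) (h' : BarMapsTo f R S') : S = S' :=
  runPrefix_injective fun n => (h n).trans (h' n).symm

theorem BarMapsTo.eq_of_injOn (hf : Set.InjOn f T₁) (hR : R ∈ Runs T₁) (hR' : R' ∈ Runs T₁)
    (h : BarMapsTo f R S) (h' : BarMapsTo f R' S) : R = R' :=
  runPrefix_injective fun n => hf (hR n) (hR' n) ((h n).symm.trans (h' n))

theorem BarMapsTo.mem_runs (hf : Chronological T₁ T₂ f) (hR : R ∈ Runs T₁)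
    (h : BarMapsTo f R S) : S ∈ Runs T₂ :=
  fun n => h n ▸ hf.1 _ (hR n)

theorem Chronological.exists_barMapsTo (hf : Chronological T₁ T₂ f) (hR : R ∈ Runs T₁) :
    ∃ S, BarMapsTo f R S := by
  have hlen : ∀ n, (f (runPrefix R n)).length = n := fun n => by
    rw [hf.2.1 _ (hR n), runPrefix_length]
  have hstep : ∀ n, f (runPrefix R n) <+: f (runPrefix R (n + 1)) := fun n => by
    rw [← take_runPrefix_of_le R n.le_succ, hf.2.2 _ (hR _)]
    exact List.take_prefix _ _
  obtain ⟨S, hS⟩ := exists_runPrefix_eq_take hstep fun n => (hlen n).ge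
  exact ⟨S, fun n => (hS n).trans (List.take_of_length_le (hlen n).le)⟩

theorem finite_setOf_barMapsTo {A : Set (ℕ → M₁)} (hA : A.Finite) :
    {S | ∃ R ∈ A, BarMapsTo f R S}.Finite := by
  refine (hA.biUnion fun R _ => Set.Subsingleton.finite (s := {S | BarMapsTo f R S})
    fun _ hS _ hS' => hS.unique hS').subset fun _ ⟨R, hR, hRS⟩ => Set.mem_biUnion hR hRS

theorem IsGameEmbedding.comp {H₁ : Game M₁} {H₂ : Game M₂} {H₃ : Game M₃}
    {g : List M₂ → List M₃} (hg : IsGameEmbedding H₂ H₃ g) (hf : IsGameEmbedding H₁ H₂ f) :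
    IsGameEmbedding H₁ H₃ (g ∘ f) := by
  obtain ⟨⟨fm, fl, ft⟩, fi, fp⟩ := hf
  obtain ⟨⟨gm, gl, gt⟩, gi, gp⟩ := hg
  refine ⟨⟨fun t ht => gm _ (fm t ht), fun t ht => (gl _ (fm t ht)).trans (fl t ht),
    fun t ht k => ?_⟩, fun t ht s hs h => fi t ht s hs (gi _ (fm t ht) _ (fm s hs) h),
    fun R hR U hU => ?_⟩
  · simp only [Function.comp_apply, ft t ht k, gt _ (fm t ht) k]
  · obtain ⟨S, hS⟩ := Chronological.exists_barMapsTo ⟨fm, fl, ft⟩ hR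
    exact (fp R hR S hS).trans (gp S (hS.mem_runs ⟨fm, fl, ft⟩ hR) U
      fun n => (hU n).trans (congrArg g (hS n)).symm)

theorem IsGameIso.exists_inverse {G₁ : Game M₁} {G₂ : Game M₂} (hf : IsGameIso G₁ G₂ f) :
    ∃ d, IsGameIso G₂ G₁ d ∧ Set.InvOn d f G₁.tree G₂.tree := by
  obtain ⟨⟨⟨hmaps, hlen, htake⟩, hinj, hpay⟩, hsurj⟩ := hf
  have hsurj' : Set.SurjOn f G₁.tree G₂.tree := hsurj
  set d := Function.invFunOn f G₁.tree
  have hleft : Set.LeftInvOn d f G₁.tree := Set.InjOn.leftInvOn_invFunOn hinj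
  have hright : Set.RightInvOn d f G₂.tree := hsurj'.rightInvOn_invFunOn
  have hd : Set.MapsTo d G₂.tree G₁.tree := hsurj'.mapsTo_invFunOn
  refine ⟨d, ⟨⟨⟨hd, fun s hs => ?_, fun s hs k => ?_⟩, fun s hs s' hs' h => ?_,
    fun S hS R hR => ?_⟩, fun t ht => ⟨f t, hmaps t ht, hleft ht⟩⟩, hleft, hright⟩
  · exact (hlen _ (hd hs)).symm.trans (congrArg List.length (hright hs))
  · calc d (s.take k) = d (f ((d s).take k)) := by rw [htake _ (hd hs), hright hs]
      _ = (d s).take k := hleft (G₁.isGameTree.1 _ (hd hs) k)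
  · rw [← hright hs, ← hright hs', h]
  · have hRruns : R ∈ Runs G₁.tree := fun n => hR n ▸ hd (hS n)
    exact (hpay R hRruns S fun n => by rw [hR n, hright (hS n)]).symm

theorem IsGameIso.isFin {H : Game M₁} {K : Game M₂} (hf : IsGameIso H K f) (hH : H.IsFin) :
    K.IsFin := by
  obtain ⟨d, hd, hinv⟩ := hf.exists_inverse
  refine (finite_setOf_barMapsTo (f := f) hH).subset fun S hS => ?_
  obtain ⟨R, hR⟩ := hd.1.1.exists_barMapsTo hS
  exact ⟨R, hR.mem_runs hd.1.1 hS, fun n => by rw [hR n, hinv.2 (hS n)]⟩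

end Embeddings

section Transfer

variable {M N : Type*}

def Game.map (φ : M → N) (H : Game M) : Game N where
  tree := List.map φ '' H.tree
  isGameTree := by
    refine ⟨?_, ?_⟩
    · rintro _ ⟨t, ht, rfl⟩ k
      exact ⟨t.take k, H.isGameTree.1 t ht k, List.map_take⟩
    · rintro _ ⟨t, ht, rfl⟩
      obtain ⟨x, hx⟩ := H.isGameTree.2 t ht
      exact ⟨φ x, t ++ [x], hx, by simp⟩
  payoff := (φ ∘ ·) '' H.payoff
  payoff_subset := by
    rintro _ ⟨R, hR, rfl⟩ n
    exact ⟨_, H.payoff_subset hR n, (runPrefix_comp φ R n).symm⟩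

theorem isGameIso_map {φ : M → N} {H : Game M} (hφ : Set.InjOn φ {a | ∃ t ∈ H.tree, a ∈ t}) :
    IsGameIso H (H.map φ) (List.map φ) := by
  have hinj : Set.InjOn (List.map φ) H.tree := fun t ht s hs h => by
    have hl : t.length = s.length := by simpa using congrArg List.length h
    refine List.ext_getElem hl fun i hi hi' => hφ ⟨t, ht, List.getElem_mem hi⟩
      ⟨s, hs, List.getElem_mem hi'⟩ ?_
    simpa [hi, hi'] using congrArg (·[i]?) h
  have hbar : ∀ R, BarMapsTo (List.map φ) R (φ ∘ R) := fun R n => runPrefix_comp φ R n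
  refine ⟨⟨⟨fun t ht => ⟨t, ht, rfl⟩, fun _ _ => List.length_map _, fun _ _ _ => List.map_take⟩,
    hinj, fun R hR S hS => ?_⟩, fun _ ⟨t, ht, hts⟩ => ⟨t, ht, hts⟩⟩
  rw [← (hbar R).unique hS]
  refine ⟨fun h => ⟨R, h, rfl⟩, fun ⟨R', hR', h⟩ => ?_⟩
  have hR'R : BarMapsTo (List.map φ) R (φ ∘ R') := (show φ ∘ R' = φ ∘ R from h) ▸ hbar R
  rwa [(hbar R').eq_of_injOn hinj (H.payoff_subset hR') hR hR'R] at hR'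

theorem Game.IsFin.countable_moves {H : Game M} (hH : H.IsFin) :
    {a | ∃ t ∈ H.tree, a ∈ t}.Countable := by
  refine (hH.countable.biUnion fun R _ => Set.countable_range R).mono ?_
  rintro a ⟨t, ht, hat⟩
  obtain ⟨R, hR, hRt⟩ := subset_prefixes_runs H.isGameTree ht
  rw [← hRt] at hat
  obtain ⟨i, -, rfl⟩ := List.mem_map.1 hat
  exact Set.mem_biUnion hR (Set.mem_range_self i)

theorem Game.IsFin.exists_isGameIso_uLift {H : Game M} (hH : H.IsFin) :
    ∃ (K : Game (ULift.{w} ℕ)) (c : List M → List (ULift.{w} ℕ)), K.IsFin ∧ IsGameIso H K c := by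
  obtain ⟨φ, hφ⟩ := Set.countable_iff_exists_injOn.1 hH.countable_moves
  have hc := isGameIso_map (ULift.up_injective.comp_injOn hφ)
  exact ⟨_, _, hc.isFin hH, hc⟩

theorem InjWrtFinGameEmb.change_univ {G : Game N} (hG : InjWrtFinGameEmb.{x, y} G) :
    InjWrtFinGameEmb.{u, v} G := by
  intro M M' H H' hH hH' e he f hf
  obtain ⟨K, c, hK, hc⟩ := hH.exists_isGameIso_uLift.{x}
  obtain ⟨K', c', hK', hc'⟩ := hH'.exists_isGameIso_uLift.{y}
  obtain ⟨d, hd, hdc, -⟩ := hc.exists_inverse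
  obtain ⟨g, hg, hge⟩ := hG _ _ K K' hK hK' _ ((hc'.1.comp he).comp hd.1) _ (hf.comp hd.1)
  exact ⟨g ∘ c', hg.comp hc'.1, fun t ht => by simpa [hdc ht] using hge (c t) (hc.1.1.1 t ht)⟩

end Transfer

theorem IsGameEmbedding.exists_isGameIso_restrict {M₁ M₂ : Type*} {H : Game M₁} {G : Game M₂}
    {g : List M₁ → List M₂} (hg : IsGameEmbedding H G g) (hH : H.IsFin) :
    ∃ S ⊆ Runs G.tree, S.Finite ∧ IsGameIso H (G.restrict S) g := by
  refine ⟨{Q | ∃ R ∈ Runs H.tree, BarMapsTo g R Q}, fun Q ⟨R, hR, hRQ⟩ => hRQ.mem_runs hg.1 hR,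
    finite_setOf_barMapsTo hH, ⟨⟨⟨fun t ht => ?_, hg.1.2⟩, hg.2.1, fun R hR Q hRQ => ?_⟩, ?_⟩⟩
  · obtain ⟨R, hR, hRt⟩ := subset_prefixes_runs H.isGameTree ht
    obtain ⟨Q, hRQ⟩ := hg.1.exists_barMapsTo hR
    exact ⟨Q, ⟨R, hR, hRQ⟩, by rw [hg.1.2.1 t ht, hRQ, hRt]⟩
  · exact (hg.2.2 R hR Q hRQ).trans (and_iff_left ⟨R, hR, hRQ⟩).symm
  · rintro s ⟨Q, ⟨R, hR, hRQ⟩, hQs⟩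
    exact ⟨runPrefix R s.length, hR _, by rw [← hRQ, hQs]⟩

structure PartialEmb {M₁ M₂ : Type*} (G₁ : Game M₁) (G₂ : Game M₂) where
  dom : Game M₁
  dom_isFin : dom.IsFin
  dom_sub : dom.Sub G₁
  toFun : List M₁ → List M₂
  isGameEmbedding : IsGameEmbedding dom G₂ toFun

namespace PartialEmb

variable {M₁ : Type u} {M₂ : Type v} {G₁ : Game M₁} {G₂ : Game M₂}

instance : Preorder (PartialEmb G₁ G₂) where
  le p q := p.dom.tree ⊆ q.dom.tree ∧ Set.EqOn q.toFun p.toFun p.dom.tree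
  le_refl _ := ⟨subset_rfl, fun _ _ => rfl⟩
  le_trans _ _ _ hpq hqr := ⟨hpq.1.trans hqr.1, fun _ ht => (hqr.2 (hpq.1 ht)).trans (hpq.2 ht)⟩

theorem mem_payoff_iff (p : PartialEmb G₁ G₂) {R : ℕ → M₁} {S : ℕ → M₂}
    (hR : R ∈ Runs p.dom.tree) (h : BarMapsTo p.toFun R S) :
    R ∈ G₁.payoff ↔ S ∈ G₂.payoff := by
  rw [← p.isGameEmbedding.2.2 R hR S h, p.dom_sub.2]
  exact (and_iff_left hR).symm

theorem exists_leftInvOn (p : PartialEmb G₁ G₂) :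
    ∃ q : PartialEmb G₂ G₁, Set.MapsTo p.toFun p.dom.tree q.dom.tree ∧
      Set.LeftInvOn q.toFun p.toFun p.dom.tree := by
  obtain ⟨S, hSG, hS, hiso⟩ := p.isGameEmbedding.exists_isGameIso_restrict p.dom_isFin
  obtain ⟨h, hh, hinv⟩ := hiso.exists_inverse
  exact ⟨⟨_, G₂.restrict_isFin hS, Game.restrict_sub hS hSG, h,
    p.dom_sub.isGameEmbedding_id.comp hh.1⟩, hiso.1.1.1, hinv.1⟩

theorem isCofinal_mem_runs (hinj : InjWrtFinGameEmb.{u, u} G₂) {R : ℕ → M₁}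
    (hR : R ∈ Runs G₁.tree) : IsCofinal {p : PartialEmb G₁ G₂ | R ∈ Runs p.dom.tree} := by
  intro p
  set S := insert R (Runs p.dom.tree)
  have hS : S.Finite := p.dom_isFin.insert R
  have hSG : (G₁.restrict S).Sub G₁ :=
    Game.restrict_sub hS (Set.insert_subset hR (runs_mono p.dom_sub.1))
  have hpS : p.dom.Sub (G₁.restrict S) := p.dom_sub.of_tree_subset hSG
    ((subset_prefixes_runs p.dom.isGameTree).trans (prefixes_mono (Set.subset_insert _ _)))
  obtain ⟨g, hg, hgp⟩ := hinj _ _ _ _ p.dom_isFin (G₁.restrict_isFin hS) _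
    hpS.isGameEmbedding_id _ p.isGameEmbedding
  exact ⟨⟨_, G₁.restrict_isFin hS, hSG, g, hg⟩, subset_runs_prefixes S (Set.mem_insert R _),
    hpS.1, hgp⟩

/-- The back step is the forth step for the partial inverse. -/
theorem isCofinal_barMapsTo (hinj : InjWrtFinGameEmb.{v, v} G₁) {S : ℕ → M₂}
    (hS : S ∈ Runs G₂.tree) :
    IsCofinal {p : PartialEmb G₁ G₂ | ∃ R ∈ Runs p.dom.tree, BarMapsTo p.toFun R S} := by
  intro p
  obtain ⟨q, hpq, hqp⟩ := p.exists_leftInvOn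
  obtain ⟨q', hSq', hqq'⟩ := isCofinal_mem_runs hinj hS q
  obtain ⟨p', hq'p', hp'q'⟩ := q'.exists_leftInvOn
  obtain ⟨R, hR⟩ := q'.isGameEmbedding.1.exists_barMapsTo hSq'
  have hq'p : ∀ t ∈ p.dom.tree, q'.toFun (p.toFun t) = t := fun t ht =>
    (hqq'.2 (hpq ht)).trans (hqp ht)
  refine ⟨p', ⟨R, fun n => hR n ▸ hq'p' (hSq' n), fun n => by rw [hR n, hp'q' (hSq' n)]⟩,
    fun t ht => hq'p t ht ▸ hq'p' (hqq'.1 (hpq ht)),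
    fun t ht => (congrArg p'.toFun (hq'p t ht)).symm.trans (hp'q' (hqq'.1 (hpq ht)))⟩

theorem exists_eqOn_of_directedOn {D : Set (PartialEmb G₁ G₂)} (hD : DirectedOn (· ≤ ·) D) :
    ∃ F : List M₁ → List M₂, ∀ p ∈ D, Set.EqOn F p.toFun p.dom.tree := by
  classical
  refine ⟨fun t => if h : ∃ p ∈ D, t ∈ p.dom.tree then h.choose.toFun t else [],
    fun p hp t ht => ?_⟩
  have h : ∃ p ∈ D, t ∈ p.dom.tree := ⟨p, hp, ht⟩
  obtain ⟨r, -, hr, hpr⟩ := hD _ h.choose_spec.1 p hp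
  simp only [dif_pos h]
  exact (hr.2 h.choose_spec.2).symm.trans (hpr.2 ht)

theorem isGameIso_of_directedOn {D : Set (PartialEmb G₁ G₂)} (hD : DirectedOn (· ≤ ·) D)
    {F : List M₁ → List M₂} (hF : ∀ p ∈ D, Set.EqOn F p.toFun p.dom.tree)
    {C₁ : Set (ℕ → M₁)} {C₂ : Set (ℕ → M₂)} (hT₁ : G₁.tree ⊆ prefixes C₁)
    (hA₁ : G₁.payoff ⊆ C₁) (hT₂ : G₂.tree ⊆ prefixes C₂) (hA₂ : G₂.payoff ⊆ C₂)
    (h₁ : ∀ R ∈ C₁, ∃ p ∈ D, R ∈ Runs p.dom.tree)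
    (h₂ : ∀ S ∈ C₂, ∃ p ∈ D, ∃ R ∈ Runs p.dom.tree, BarMapsTo p.toFun R S) :
    IsGameIso G₁ G₂ F := by
  have hdom : ∀ t ∈ G₁.tree, ∃ p ∈ D, t ∈ p.dom.tree := fun t ht => by
    obtain ⟨R, hR, hRt⟩ := hT₁ ht
    obtain ⟨p, hp, hRp⟩ := h₁ R hR
    exact ⟨p, hp, hRt ▸ hRp _⟩
  have hinj : Set.InjOn F G₁.tree := fun t ht s hs hts => by
    obtain ⟨p, hp, htp⟩ := hdom t ht
    obtain ⟨q, hq, hsq⟩ := hdom s hs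
    obtain ⟨r, hr, hpr, hqr⟩ := hD p hp q hq
    exact r.isGameEmbedding.2.1 t (hpr.1 htp) s (hqr.1 hsq)
      (by rwa [← hF r hr (hpr.1 htp), ← hF r hr (hqr.1 hsq)])
  have hchron : Chronological G₁.tree G₂.tree F := by
    refine ⟨fun t ht => ?_, fun t ht => ?_, fun t ht k => ?_⟩ <;>
      obtain ⟨p, hp, htp⟩ := hdom t ht <;> rw [hF p hp htp]
    · exact p.isGameEmbedding.1.1 t htp
    · exact p.isGameEmbedding.1.2.1 t htp
    · rw [hF p hp (p.dom.isGameTree.1 t htp k)]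
      exact p.isGameEmbedding.1.2.2 t htp k
  refine ⟨⟨hchron, hinj, fun R hR S hRS => ?_⟩, fun s hs => ?_⟩
  · by_cases hA : R ∈ G₁.payoff ∨ S ∈ G₂.payoff
    -- then `R` lies in the domain of a single member of `D`, which decides both sides
    · obtain ⟨p, hp, hRp⟩ : ∃ p ∈ D, R ∈ Runs p.dom.tree := by
        rcases hA with hRA | hSA
        · exact h₁ R (hA₁ hRA)
        · obtain ⟨p, hp, R', hR', hR'S⟩ := h₂ S (hA₂ hSA)
          have hR'F : BarMapsTo F R' S := fun n => (hR'S n).trans (hF p hp (hR' n)).symm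
          exact ⟨p, hp, hR'F.eq_of_injOn hinj (runs_mono p.dom_sub.1 hR') hR hRS ▸ hR'⟩
      exact p.mem_payoff_iff hRp fun n => (hRS n).trans (hF p hp (hRp n))
    · exact iff_of_false (not_or.1 hA).1 (not_or.1 hA).2
  · obtain ⟨S, hS, hSs⟩ := hT₂ hs
    obtain ⟨p, hp, R, hR, hRS⟩ := h₂ S hS
    exact ⟨runPrefix R s.length, runs_mono p.dom_sub.1 hR _, by rw [hF p hp (hR _), ← hRS, hSs]⟩

end PartialEmb

theorem Game.exists_countable_runs_cover {M : Type*} (G : Game M) (hT : G.tree.Countable)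
    (hA : G.payoff.Countable) :
    ∃ C ⊆ Runs G.tree, C.Countable ∧ G.tree ⊆ prefixes C ∧ G.payoff ⊆ C := by
  have : Countable G.tree := hT.to_subtype
  choose r hr hrt using fun t : G.tree => subset_prefixes_runs G.isGameTree t.2
  exact ⟨G.payoff ∪ Set.range r, Set.union_subset G.payoff_subset (Set.range_subset_iff.2 hr),
    hA.union (Set.countable_range r), fun t ht => ⟨r ⟨t, ht⟩, Or.inr ⟨_, rfl⟩, hrt _⟩,
    Set.subset_union_left⟩

/-- a back-and-forth between two countable games injective w.r.t.
finite-game embeddings: any embedding of a finite subgame of the first into the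
second extends to an isomorphism. -/
theorem embedding_extends_to_iso {M₁ : Type u} {M₂ : Type v}
    (G₁ : Game M₁) (G₂ : Game M₂)
    (hT₁ : G₁.tree.Countable) (hT₂ : G₂.tree.Countable)
    (hA₁ : G₁.payoff.Countable) (hA₂ : G₂.payoff.Countable)
    (hinj₁ : InjWrtFinGameEmb.{x, y, u} G₁)
    (hinj₂ : InjWrtFinGameEmb.{x, y, v} G₂)
    (G : Game M₁) (hGfin : G.IsFin) (hle : G.Sub G₁)
    (f : List M₁ → List M₂) (hf : IsGameEmbedding G G₂ f) :
    ∃ ftil : List M₁ → List M₂, IsGameIso G₁ G₂ ftil ∧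
      ∀ t ∈ G.tree, ftil t = f t := by
  obtain ⟨C₁, hC₁, hC₁c, hT₁C₁, hA₁C₁⟩ := G₁.exists_countable_runs_cover hT₁ hA₁
  obtain ⟨C₂, hC₂, hC₂c, hT₂C₂, hA₂C₂⟩ := G₂.exists_countable_runs_cover hT₂ hA₂
  have := hC₁c.toEncodable
  have := hC₂c.toEncodable
  let 𝒟 : C₁ ⊕ C₂ → Order.Cofinal (PartialEmb G₁ G₂) :=
    Sum.elim (fun R => ⟨_, PartialEmb.isCofinal_mem_runs hinj₂.change_univ (hC₁ R.2)⟩)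
      fun S => ⟨_, PartialEmb.isCofinal_barMapsTo hinj₁.change_univ (hC₂ S.2)⟩
  let p₀ : PartialEmb G₁ G₂ := ⟨G, hGfin, hle, f, hf⟩
  let I := Order.idealOfCofinals p₀ 𝒟
  obtain ⟨F, hF⟩ := PartialEmb.exists_eqOn_of_directedOn I.directed
  refine ⟨F, PartialEmb.isGameIso_of_directedOn I.directed hF hT₁C₁ hA₁C₁ hT₂C₂ hA₂C₂
    (fun R hR => ?_) (fun S hS => ?_), hF p₀ (Order.mem_idealOfCofinals p₀ 𝒟)⟩
  · exact (Order.cofinal_meets_idealOfCofinals p₀ 𝒟 (.inl ⟨R, hR⟩)).imp fun _ => And.symm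
  · exact (Order.cofinal_meets_idealOfCofinals p₀ 𝒟 (.inr ⟨S, hS⟩)).imp fun _ => And.symm

end FraisseGames
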